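/- Fix n ≥ 2 and let ε = (ε_{ji})_{1 ≤ j < i ≤ n−1} and ε' = (ε'_{ji})_{1 ≤ j < i ≤ n−1} be two choices of parameters with entries in {0, 1/2}. Then the groups Γ(ε) and Γ(ε') are isomorphic as abstract groups if and only if ε = ε'. -/

import Mathlib

/-- The diagonal matrix `C_i = diag(1,…,1,−1,1,…,1)` with `−1` in the `i`-th place
(indices numbered from `0`). -/
def Cmat (n i : ℕ) : Matrix (Fin n) (Fin n) ℝ :=
  Matrix.diagonal (fun a => if (a : ℕ) = i then -1 else 1)

/-- The translation vector `c_i = (1/2) e_{i+1} + ∑_{j<i} ε_{ji} e_j`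
(indices numbered from `0`). -/
noncomputable def cvec (n : ℕ) (ε : ℕ → ℕ → ℝ) (i : ℕ) : Fin n → ℝ :=
  fun m => if (m : ℕ) = i + 1 then 1 / 2 else if (m : ℕ) < i then ε m i else 0

/-- The generating set of `Γ(ε)` inside the group of affine isometries of `ℝ^n`: the affine
maps `x ↦ C_i x + c_i` for `0 ≤ i ≤ n−2` together with all translations by vectors of `ℤ^n`. -/
def gammaEpsSet (n : ℕ) (ε : ℕ → ℕ → ℝ) :
    Set (EuclideanSpace ℝ (Fin n) ≃ᵃⁱ[ℝ] EuclideanSpace ℝ (Fin n)) :=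
  {γ | (∃ i, i < n - 1 ∧ ∀ x, γ x = (Cmat n i).mulVec x + cvec n ε i) ∨
       (∃ lam : Fin n → ℤ, ∀ x, γ x = fun m => x m + (lam m : ℝ))}

/-- The group `Γ(ε)`, as the subgroup of the group of affine isometries of `ℝ^n` generated
by the maps `x ↦ C_i x + c_i` for `0 ≤ i ≤ n−2` and the translations by `ℤ^n`. -/
noncomputable def GammaEps (n : ℕ) (ε : ℕ → ℕ → ℝ) :
    Subgroup (EuclideanSpace ℝ (Fin n) ≃ᵃⁱ[ℝ] EuclideanSpace ℝ (Fin n)) :=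
  Subgroup.closure (gammaEpsSet n ε)

namespace GEaux

variable {n : ℕ}

abbrev E (n : ℕ) := EuclideanSpace ℝ (Fin n)
abbrev G (n : ℕ) := E n ≃ᵃⁱ[ℝ] E n

noncomputable def transl (v : Fin n → ℝ) : G n :=
  AffineIsometryEquiv.constVAdd ℝ (E n) (WithLp.toLp 2 v)

lemma transl_apply (v : Fin n → ℝ) (x : E n) (m : Fin n) : transl v x m = x m + v m := by
  simp [transl]
  exact add_comm _ _

def sgn (s : Fin n → Bool) : Fin n → ℝ := fun m => if s m then -1 else 1

lemma sgn_sq (s : Fin n → Bool) (m : Fin n) : sgn s m * sgn s m = 1 := by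
  unfold sgn; rcases s m <;> norm_num

noncomputable def diagG (s : Fin n → Bool) : G n :=
  LinearIsometryEquiv.toAffineIsometryEquiv
  { toFun := fun x => (WithLp.toLp 2 (fun m => sgn s m * x m) : E n)
    invFun := fun x => (WithLp.toLp 2 (fun m => sgn s m * x m) : E n)
    map_add' := by intro x y; ext m; show sgn s m * (x m + y m) = _ ; ring_nf; rfl
    map_smul' := by intro c x; ext m; show sgn s m * (c * x m) = c * (sgn s m * x m); ring
    left_inv := by intro x; ext m; show sgn s m * (sgn s m * x m) = x m;
                   rw [← mul_assoc, sgn_sq, one_mul]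
    right_inv := by intro x; ext m; show sgn s m * (sgn s m * x m) = x m;
                    rw [← mul_assoc, sgn_sq, one_mul]
    norm_map' := by
      intro x
      rw [EuclideanSpace.norm_eq, EuclideanSpace.norm_eq]
      congr 1
      apply Finset.sum_congr rfl
      intro m _
      show ‖sgn s m * x m‖ ^ 2 = _
      rw [norm_mul]
      unfold sgn; rcases s m <;> simp }

lemma diagG_apply (s : Fin n → Bool) (x : E n) (m : Fin n) : diagG s x m = sgn s m * x m := rfl

def HasData (γ : G n) (s : Fin n → Bool) (v : Fin n → ℝ) : Prop :=
  ∀ x m, γ x m = sgn s m * x m + v m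

lemma hasData_transl (v : Fin n → ℝ) : HasData (transl v) (fun _ => false) v := by
  intro x m; rw [transl_apply]; simp [sgn]

lemma hasData_mul {γ δ : G n} {s s' v v'} (h : HasData γ s v) (h' : HasData δ s' v') :
    HasData (γ * δ) (fun m => xor (s m) (s' m)) (fun m => sgn s m * v' m + v m) := by
  intro x m
  have : (γ * δ) x = γ (δ x) := rfl
  rw [this, h (δ x) m, h' x m]
  have hx : sgn (fun m => xor (s m) (s' m)) m = sgn s m * sgn s' m := by
    unfold sgn; cases hs : s m <;> cases hs' : s' m <;> simp [hs, hs']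
  rw [hx]; ring

lemma hasData_inv {γ : G n} {s v} (h : HasData γ s v) :
    HasData γ⁻¹ s (fun m => -(sgn s m * v m)) := by
  intro x m
  have h2 : γ (γ⁻¹ x) = x := by
    show (γ * γ⁻¹) x = x
    rw [mul_inv_cancel]; rfl
  have h3 := h (γ⁻¹ x) m
  rw [h2] at h3
  show γ⁻¹ x m = sgn s m * x m + -(sgn s m * v m)
  unfold sgn at *
  cases hs : s m <;> rw [hs] at h3 <;> norm_num at * <;> try linarith

lemma hasData_one : HasData (1 : G n) (fun _ => false) (fun _ => 0) := by
  intro x m; show x m = _; simp [sgn]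

noncomputable def Vdat (γ : G n) : Fin n → ℝ := fun m => γ 0 m

noncomputable def Sdat (γ : G n) : Fin n → Bool :=
  fun m => decide (γ (EuclideanSpace.single m 1) m < γ 0 m)

lemma zero_apply (m : Fin n) : (0 : E n) m = 0 := rfl

lemma hasData_vdat {γ : G n} {s v} (h : HasData γ s v) : Vdat γ = v := by
  funext m
  have := h 0 m
  rw [zero_apply] at this
  simpa [Vdat] using this

lemma hasData_sdat {γ : G n} {s v} (h : HasData γ s v) : Sdat γ = s := by
  funext m
  have h1 := h (EuclideanSpace.single m 1) m
  have h0 := h 0 m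
  rw [zero_apply] at h0
  rw [EuclideanSpace.single_apply] at h1
  simp only [if_pos rfl, mul_one] at h1
  unfold Sdat
  rw [h1, h0]
  unfold sgn
  rcases hsm : s m <;> norm_num <;> linarith

lemma ext_of_hasData {γ δ : G n} {s v} (h : HasData γ s v) (h' : HasData δ s v) : γ = δ := by
  apply AffineIsometryEquiv.ext
  intro x
  ext m
  rw [h x m, h' x m]

lemma hasData_self {γ : G n} {s v} (h : HasData γ s v) : HasData γ (Sdat γ) (Vdat γ) := by
  rw [hasData_sdat h, hasData_vdat h]; exact h


/-! ## The explicit description of the subgroup -/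

noncomputable def cS (ε : ℕ → ℕ → ℝ) (s : Fin n → Bool) : Fin n → ℝ :=
  fun m => ∑ i : Fin n, if s i then cvec n ε i m else 0

def Cos (ε : ℕ → ℕ → ℝ) (s : Fin n → Bool) (v : Fin n → ℝ) : Prop :=
  ∀ m, ∃ l : ℤ, v m = cS ε s m + l

def Supp (s : Fin n → Bool) : Prop := ∀ m, s m = true → (m : ℕ) < n - 1

def P (n : ℕ) (ε : ℕ → ℕ → ℝ) : Set (G n) :=
  {γ | ∃ s v, Supp s ∧ Cos ε s v ∧ HasData γ s v}

lemma cS_false (ε : ℕ → ℕ → ℝ) : cS (n := n) ε (fun _ => false) = fun _ => 0 := by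
  funext m; unfold cS; simp

lemma two_cvec_cases (ε : ℕ → ℕ → ℝ) (hε : ∀ j i, j < i → i < n - 1 → ε j i = 0 ∨ ε j i = 1 / 2)
    {i : ℕ} (hi : i < n - 1) (m : Fin n) :
    2 * cvec n ε i m = 0 ∨ 2 * cvec n ε i m = 1 := by
  unfold cvec
  split_ifs with h1 h2
  · right; norm_num
  · rcases hε m i h2 hi with h | h <;> [left; right] <;> rw [h] <;> norm_num
  · left; norm_num

lemma cS_halfint (ε : ℕ → ℕ → ℝ) (hε : ∀ j i, j < i → i < n - 1 → ε j i = 0 ∨ ε j i = 1 / 2)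
    {s : Fin n → Bool} (hs : Supp s) (m : Fin n) :
    ∃ l : ℤ, 2 * cS ε s m = l := by
  unfold cS
  rw [Finset.mul_sum]
  have : ∀ i : Fin n, ∃ l : ℤ, 2 * (if s i then cvec n ε i m else 0) = (l : ℝ) := by
    intro i
    rcases hi : s i with _ | _
    · exact ⟨0, by norm_num⟩
    · rcases two_cvec_cases ε hε (hs i hi) m with h | h
      · exact ⟨0, by rw [if_pos rfl]; rw [h]; norm_num⟩
      · exact ⟨1, by rw [if_pos rfl]; rw [h]; norm_num⟩
  choose f hf using this
  exact ⟨∑ i : Fin n, f i, by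
    rw [Finset.sum_congr rfl (fun i _ => hf i)]; push_cast; ring⟩

lemma cos_halfint (ε : ℕ → ℕ → ℝ) (hε : ∀ j i, j < i → i < n - 1 → ε j i = 0 ∨ ε j i = 1 / 2)
    {s : Fin n → Bool} (hs : Supp s) {v : Fin n → ℝ} (hv : Cos ε s v) (m : Fin n) :
    ∃ l : ℤ, 2 * v m = l := by
  obtain ⟨l, hl⟩ := hv m
  obtain ⟨l', hl'⟩ := cS_halfint ε hε hs m
  exact ⟨l' + 2 * l, by rw [hl]; push_cast; linarith⟩

lemma cS_add (ε : ℕ → ℕ → ℝ) (s s' : Fin n → Bool) (m : Fin n) :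
    cS ε s m + cS ε s' m =
      cS ε (fun i => xor (s i) (s' i)) m + 2 * cS ε (fun i => s i && s' i) m := by
  unfold cS
  rw [← Finset.sum_add_distrib, Finset.mul_sum, ← Finset.sum_add_distrib]
  apply Finset.sum_congr rfl
  intro i _
  cases hi : s i <;> cases hi' : s' i <;> simp [hi, hi'] <;> ring

lemma supp_xor {s s' : Fin n → Bool} (hs : Supp s) (hs' : Supp s') :
    Supp (fun i => xor (s i) (s' i)) := by
  intro m hm
  have hm' : xor (s m) (s' m) = true := hm
  rcases h : s m with _|_
  · rw [h] at hm'; simp at hm'; exact hs' m hm'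
  · exact hs m h

lemma supp_and {s s' : Fin n → Bool} (hs : Supp s) :
    Supp (fun i => s i && s' i) := by
  intro m hm
  exact hs m (by simpa using (Bool.and_eq_true _ _ ▸ hm).1)

lemma cos_mul (ε : ℕ → ℕ → ℝ) (hε : ∀ j i, j < i → i < n - 1 → ε j i = 0 ∨ ε j i = 1 / 2)
    {s s' : Fin n → Bool} (hs : Supp s) (hs' : Supp s')
    {v v' : Fin n → ℝ} (hv : Cos ε s v) (hv' : Cos ε s' v') :
    Cos ε (fun i => xor (s i) (s' i)) (fun m => sgn s m * v' m + v m) := by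
  intro m
  obtain ⟨a, ha⟩ := hv m
  obtain ⟨b, hb⟩ := hv' m
  obtain ⟨c, hc⟩ := cos_halfint ε hε hs' hv' m
  obtain ⟨d, hd⟩ := cS_halfint (s := fun i => s i && s' i) ε hε (supp_and hs) m
  have key : sgn s m * v' m = v' m ∨ sgn s m * v' m = v' m - 2 * v' m := by
    unfold sgn; cases h : s m
    · left; rw [if_neg (by simp)]; ring
    · right; rw [if_pos rfl]; ring
  have hadd := cS_add ε s s' m
  rcases key with h | h
  · refine ⟨a + b + d, ?_⟩
    show sgn s m * v' m + v m = _
    rw [h, hb, ha]; push_cast; linarith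
  · refine ⟨a + b + d - c, ?_⟩
    show sgn s m * v' m + v m = _
    rw [h, hb, ha]; push_cast; linarith

lemma cos_inv (ε : ℕ → ℕ → ℝ) (hε : ∀ j i, j < i → i < n - 1 → ε j i = 0 ∨ ε j i = 1 / 2)
    {s : Fin n → Bool} (hs : Supp s) {v : Fin n → ℝ} (hv : Cos ε s v) :
    Cos ε s (fun m => -(sgn s m * v m)) := by
  intro m
  obtain ⟨a, ha⟩ := hv m
  obtain ⟨c, hc⟩ := cos_halfint ε hε hs hv m
  obtain ⟨d, hd⟩ := cS_halfint ε hε hs m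
  have key : sgn s m * v m = v m ∨ sgn s m * v m = v m - 2 * v m := by
    unfold sgn; cases h : s m
    · left; rw [if_neg (by simp)]; ring
    · right; rw [if_pos rfl]; ring
  rcases key with h | h
  · refine ⟨-a - d, ?_⟩
    show -(sgn s m * v m) = _
    rw [h, ha]; push_cast; linarith
  · refine ⟨c - a - d, ?_⟩
    show -(sgn s m * v m) = _
    rw [h, ha]; push_cast; linarith

/-- `P` as a subgroup. -/
noncomputable def Psub (n : ℕ) (ε : ℕ → ℕ → ℝ)
    (hε : ∀ j i, j < i → i < n - 1 → ε j i = 0 ∨ ε j i = 1 / 2) : Subgroup (G n) where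
  carrier := P n ε
  one_mem' := ⟨fun _ => false, fun _ => 0, fun m h => by simp at h,
    fun m => ⟨0, by rw [cS_false]; norm_num⟩, hasData_one⟩
  mul_mem' := by
    rintro a b ⟨s, v, hs, hv, hd⟩ ⟨s', v', hs', hv', hd'⟩
    exact ⟨_, _, supp_xor hs hs', cos_mul ε hε hs hs' hv hv', hasData_mul hd hd'⟩
  inv_mem' := by
    rintro a ⟨s, v, hs, hv, hd⟩
    exact ⟨_, _, hs, cos_inv ε hε hs hv, hasData_inv hd⟩


/-! ## Generators -/

lemma hasData_congr {γ : G n} {s s' : Fin n → Bool} {v v' : Fin n → ℝ}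
    (h : HasData γ s v) (hs : s = s') (hv : v = v') : HasData γ s' v' := hs ▸ hv ▸ h

lemma hasData_diagG (s : Fin n → Bool) : HasData (diagG s) s (fun _ => 0) := by
  intro x m; rw [diagG_apply]; ring

noncomputable def gammaGen (ε : ℕ → ℕ → ℝ) (i : ℕ) : G n :=
  transl (cvec n ε i) * diagG (fun m => decide ((m : ℕ) = i))

lemma hasData_gammaGen (ε : ℕ → ℕ → ℝ) (i : ℕ) :
    HasData (gammaGen (n := n) ε i) (fun m => decide ((m : ℕ) = i)) (cvec n ε i) := by
  have := hasData_mul (hasData_transl (cvec n ε i))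
    (hasData_diagG (fun m => decide ((m : ℕ) = i)))
  refine hasData_congr this ?_ ?_
  · funext m; simp [sgn]
  · funext m; simp [sgn]

lemma cS_single (ε : ℕ → ℕ → ℝ) {i : ℕ} (hi : i < n) :
    cS (n := n) ε (fun m => decide ((m : ℕ) = i)) = cvec n ε i := by
  funext m
  unfold cS
  rw [Finset.sum_eq_single (⟨i, hi⟩ : Fin n)]
  · simp
  · intro b _ hb
    rw [if_neg]
    simp only [decide_eq_true_eq]
    intro hbi
    exact hb (Fin.ext hbi)
  · intro h; exact absurd (Finset.mem_univ _) h

lemma add_apply (u w : E n) (m : Fin n) : (u + w) m = u m + w m := rfl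

lemma gens_sub (hn : 2 ≤ n) (ε : ℕ → ℕ → ℝ) : gammaEpsSet n ε ⊆ P n ε := by
  rintro γ (⟨i, hi, hγ⟩ | ⟨lam, hγ⟩)
  · have hi' : i < n := lt_of_lt_of_le hi (Nat.sub_le n 1)
    refine ⟨fun m => decide ((m : ℕ) = i), cvec n ε i, ?_, ?_, ?_⟩
    · intro m hm
      simp only [decide_eq_true_eq] at hm
      rw [hm]; exact hi
    · intro m
      exact ⟨0, by rw [cS_single ε hi']; norm_num⟩
    · intro x m
      have := congrFun (hγ x) m
      rw [this, Pi.add_apply]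
      unfold Cmat
      rw [Matrix.mulVec_diagonal]
      congr 1
      unfold sgn
      by_cases h : (m : ℕ) = i <;> simp [h]
  · refine ⟨fun _ => false, fun m => (lam m : ℝ), fun m h => by simp at h, ?_, ?_⟩
    · intro m; exact ⟨lam m, by rw [cS_false]; norm_num⟩
    · intro x m
      have := congrFun (hγ x) m
      rw [this]
      simp [sgn]

lemma transl_mem_gens (ε : ℕ → ℕ → ℝ) (lam : Fin n → ℤ) :
    transl (fun m => (lam m : ℝ)) ∈ gammaEpsSet n ε := by
  right
  exact ⟨lam, fun x => by funext m; rw [transl_apply]⟩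

lemma gammaGen_mem_gens (ε : ℕ → ℕ → ℝ) {i : ℕ} (hi : i < n - 1) :
    gammaGen (n := n) ε i ∈ gammaEpsSet n ε := by
  left
  refine ⟨i, hi, fun x => ?_⟩
  funext m
  rw [hasData_gammaGen ε i x m, Pi.add_apply]
  unfold Cmat
  rw [Matrix.mulVec_diagonal]
  congr 1
  unfold sgn
  by_cases h : (m : ℕ) = i <;> simp [h]

lemma P_le_closure (hn : 2 ≤ n) (ε : ℕ → ℕ → ℝ)
    (hε : ∀ j i, j < i → i < n - 1 → ε j i = 0 ∨ ε j i = 1 / 2) :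
    P n ε ⊆ ↑(Subgroup.closure (gammaEpsSet n ε)) := by
  suffices H : ∀ k (γ : G n) (s : Fin n → Bool) (v : Fin n → ℝ), Supp s → Cos ε s v →
      HasData γ s v → (Finset.univ.filter (fun m => s m = true)).card = k →
      γ ∈ Subgroup.closure (gammaEpsSet n ε) by
    rintro γ ⟨s, v, hs, hv, hd⟩
    exact H _ γ s v hs hv hd rfl
  intro k
  induction k with
  | zero =>
    intro γ s v hs hv hd hc
    have hsf : ∀ m, s m = false := by
      intro m
      rcases h : s m with _ | _
      · rfl
      · exfalso
        have : m ∈ Finset.univ.filter (fun m => s m = true) := by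
          simp [Finset.mem_filter, h]
        rw [Finset.card_eq_zero] at hc
        rw [hc] at this
        exact absurd this (Finset.notMem_empty m)
    have hv' : ∀ m, ∃ l : ℤ, v m = l := by
      intro m
      obtain ⟨l, hl⟩ := hv m
      refine ⟨l, ?_⟩
      rw [hl]
      have : cS ε s m = 0 := by
        unfold cS
        apply Finset.sum_eq_zero
        intro i _
        rw [hsf i]
        simp
      rw [this]; ring
    choose lam hlam using hv'
    have hγ : γ = transl (fun m => (lam m : ℝ)) := by
      apply ext_of_hasData (hasData_congr hd (funext hsf) (funext hlam))
      exact hasData_transl _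
    rw [hγ]
    exact Subgroup.subset_closure (transl_mem_gens ε lam)
  | succ k ih =>
    intro γ s v hs hv hd hc
    have hne : (Finset.univ.filter (fun m => s m = true)).Nonempty := by
      rw [← Finset.card_pos, hc]; omega
    obtain ⟨iF, hiF⟩ := hne
    have hi : s iF = true := (Finset.mem_filter.mp hiF).2
    have hilt : (iF : ℕ) < n - 1 := hs iF hi
    have hiltn : (iF : ℕ) < n := iF.isLt
    have hdg := hasData_gammaGen (n := n) ε (iF : ℕ)
    have hd' := hasData_mul hd hdg
    have hsuppg : Supp (n := n) (fun m => decide ((m : ℕ) = (iF : ℕ))) := by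
      intro m hm
      simp only [decide_eq_true_eq] at hm
      rw [hm]; exact hilt
    have hcosg : Cos ε (fun m => decide ((m : ℕ) = (iF : ℕ))) (cvec n ε iF) := by
      intro m
      exact ⟨0, by rw [cS_single ε hiltn]; norm_num⟩
    have hsupp' := supp_xor hs hsuppg
    have hcos' := cos_mul ε hε hs hsuppg hv hcosg
    have hset : Finset.univ.filter
        (fun m => (xor (s m) (decide ((m : ℕ) = (iF : ℕ)))) = true)
        = (Finset.univ.filter (fun m => s m = true)).erase iF := by
      ext m
      simp only [Finset.mem_filter, Finset.mem_erase, Finset.mem_univ, true_and]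
      by_cases hm : m = iF
      · subst hm
        simp [hi]
      · have : ((m : ℕ) = (iF : ℕ)) = False := by
          simp only [eq_iff_iff, iff_false]
          intro h; exact hm (Fin.ext h)
        simp [this, hm]
    have hcard : (Finset.univ.filter
        (fun m => (xor (s m) (decide ((m : ℕ) = (iF : ℕ)))) = true)).card = k := by
      rw [hset, Finset.card_erase_of_mem hiF, hc]
      omega
    have hmem := ih (γ * gammaGen ε (iF : ℕ)) _ _ hsupp' hcos' hd' hcard
    have hγ : γ = (γ * gammaGen ε (iF : ℕ)) * (gammaGen (n := n) ε (iF : ℕ))⁻¹ := by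
      group
    rw [hγ]
    exact mul_mem hmem (inv_mem (Subgroup.subset_closure (gammaGen_mem_gens ε hilt)))

lemma gamma_eq_P (hn : 2 ≤ n) (ε : ℕ → ℕ → ℝ)
    (hε : ∀ j i, j < i → i < n - 1 → ε j i = 0 ∨ ε j i = 1 / 2) :
    GammaEps n ε = Psub n ε hε := by
  apply le_antisymm
  · rw [GammaEps, Subgroup.closure_le]
    exact gens_sub hn ε
  · intro γ hγ
    exact P_le_closure hn ε hε hγ

lemma mem_gamma_iff (hn : 2 ≤ n) (ε : ℕ → ℕ → ℝ)
    (hε : ∀ j i, j < i → i < n - 1 → ε j i = 0 ∨ ε j i = 1 / 2) (γ : G n) :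
    γ ∈ GammaEps n ε ↔ γ ∈ P n ε := by
  rw [gamma_eq_P hn ε hε]; rfl


/-! ## Elements of the subgroup -/

lemma P_data {ε : ℕ → ℕ → ℝ} {γ : G n} (h : γ ∈ P n ε) :
    Supp (Sdat γ) ∧ Cos ε (Sdat γ) (Vdat γ) ∧ HasData γ (Sdat γ) (Vdat γ) := by
  obtain ⟨s, v, hs, hv, hd⟩ := h
  rw [hasData_sdat hd, hasData_vdat hd]
  exact ⟨hs, hv, hd⟩

lemma transl_int_mem (ε : ℕ → ℕ → ℝ) (lam : Fin n → ℤ) :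
    transl (fun m => (lam m : ℝ)) ∈ GammaEps n ε :=
  Subgroup.subset_closure (transl_mem_gens ε lam)

lemma gammaGen_mem (ε : ℕ → ℕ → ℝ) {i : ℕ} (hi : i < n - 1) :
    gammaGen (n := n) ε i ∈ GammaEps n ε :=
  Subgroup.subset_closure (gammaGen_mem_gens ε hi)

noncomputable def tG (ε : ℕ → ℕ → ℝ) (lam : Fin n → ℤ) : ↥(GammaEps n ε) :=
  ⟨transl (fun m => (lam m : ℝ)), transl_int_mem ε lam⟩

noncomputable def gG (ε : ℕ → ℕ → ℝ) (i : ℕ) (hi : i < n - 1) : ↥(GammaEps n ε) :=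
  ⟨gammaGen ε i, gammaGen_mem ε hi⟩

lemma transl_add (a b : Fin n → ℝ) : transl a * transl b = transl (fun m => a m + b m) := by
  apply AffineIsometryEquiv.ext
  intro x
  ext m
  show transl a (transl b x) m = _
  rw [transl_apply, transl_apply, transl_apply]
  ring

lemma transl_inj {a b : Fin n → ℝ} (h : transl a = transl b) : a = b := by
  funext m
  have := congrFun (congrArg (fun (γ : G n) => (γ 0 : Fin n → ℝ)) h) m
  simp only at this
  rw [transl_apply, transl_apply, zero_apply] at this
  linarith

lemma tG_mul (ε : ℕ → ℕ → ℝ) (a b : Fin n → ℤ) :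
    tG ε (a + b) = tG ε a * tG ε b := by
  apply Subtype.ext
  show transl _ = transl _ * transl _
  rw [transl_add]
  congr 1
  funext m
  push_cast
  simp

lemma tG_inj {ε : ℕ → ℕ → ℝ} {a b : Fin n → ℤ} (h : tG ε a = tG ε b) : a = b := by
  have := transl_inj (congrArg Subtype.val h)
  funext m
  have := congrFun this m
  exact_mod_cast this

lemma tG_zero (ε : ℕ → ℕ → ℝ) : tG (n := n) ε 0 = 1 := by
  apply Subtype.ext
  show transl _ = (1 : G n)
  apply AffineIsometryEquiv.ext
  intro x
  ext m
  rw [transl_apply]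
  show x m + ((0:ℤ):ℝ) = x m
  simp

lemma conj_transl {γ : G n} {s : Fin n → Bool} {v : Fin n → ℝ} (hd : HasData γ s v)
    (lam : Fin n → ℝ) :
    γ * transl lam * γ⁻¹ = transl (fun m => sgn s m * lam m) := by
  have h1 := hasData_mul (hasData_mul hd (hasData_transl lam)) (hasData_inv hd)
  apply ext_of_hasData (hasData_congr h1 ?_ ?_) (hasData_transl _)
  · funext m
    cases h : s m <;> simp [h]
  · funext m
    have := sgn_sq s m
    have hsx : sgn (fun m => xor (s m) false) m = sgn s m := by
      cases h : s m <;> simp [sgn, h]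
    rw [hsx]
    linear_combination (-(v m)) * sgn_sq s m

def sInt (s : Fin n → Bool) (lam : Fin n → ℤ) : Fin n → ℤ :=
  fun m => if s m then -lam m else lam m

lemma sInt_cast (s : Fin n → Bool) (lam : Fin n → ℤ) :
    (fun m => ((sInt s lam m : ℤ) : ℝ)) = fun m => sgn s m * (lam m : ℝ) := by
  funext m
  unfold sInt sgn
  cases h : s m <;> simp

lemma conj_tG (hn : 2 ≤ n) (ε : ℕ → ℕ → ℝ)
    (hε : ∀ j i, j < i → i < n - 1 → ε j i = 0 ∨ ε j i = 1 / 2)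
    (γ : ↥(GammaEps n ε)) (lam : Fin n → ℤ) :
    γ * tG ε lam * γ⁻¹ = tG ε (sInt (Sdat ↑γ) lam) := by
  apply Subtype.ext
  have hmem : (γ : G n) ∈ P n ε := (mem_gamma_iff hn ε hε _).mp γ.2
  obtain ⟨-, -, hd⟩ := P_data hmem
  show (γ : G n) * transl _ * (γ : G n)⁻¹ = transl _
  rw [conj_transl hd]
  rw [sInt_cast]

/-- Key step: any isomorphism maps integer translations to integer translations. -/
lemma step_T (hn : 2 ≤ n) (ε₁ ε₂ : ℕ → ℕ → ℝ)
    (hε₁ : ∀ j i, j < i → i < n - 1 → ε₁ j i = 0 ∨ ε₁ j i = 1 / 2)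
    (hε₂ : ∀ j i, j < i → i < n - 1 → ε₂ j i = 0 ∨ ε₂ j i = 1 / 2)
    (ψ : ↥(GammaEps n ε₁) ≃* ↥(GammaEps n ε₂)) (lam : Fin n → ℤ) :
    Sdat ((ψ (tG ε₁ lam) : G n)) = fun _ => false := by
  by_contra hcon
  have : ∃ i, Sdat ((ψ (tG ε₁ lam) : G n)) i = true := by
    by_contra h
    push_neg at h
    exact hcon (funext fun i => by
      rcases hh : Sdat ((ψ (tG ε₁ lam) : G n)) i with _|_
      · rfl
      · exact absurd hh (h i))
  obtain ⟨i, hσi⟩ := this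
  set h := ψ (tG ε₁ lam) with hh_def
  obtain ⟨hsupp, hcos, hdh⟩ := P_data ((mem_gamma_iff hn ε₂ hε₂ _).mp h.2)
  set σ := Sdat ((h : G n)) with hσ_def
  set w := Vdat ((h : G n)) with hw_def
  set e : Fin n → ℤ := fun m => if m = i then 1 else 0 with he_def
  set t : ↥(GammaEps n ε₂) := tG ε₂ e with ht_def
  set a : ↥(GammaEps n ε₂) := t * h * t⁻¹ with ha_def
  -- a = t h t⁻¹ commutes with h since ψ.symm of both sides are commuting translations
  have hcomm : h * a = a * h := by
    apply ψ.symm.injective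
    have hsh : ψ.symm h = tG ε₁ lam := by rw [hh_def]; exact ψ.symm_apply_apply _
    have hsa : ψ.symm a = (ψ.symm t) * tG ε₁ lam * (ψ.symm t)⁻¹ := by
      rw [ha_def, map_mul, map_mul, map_inv, hsh]
    have e1 : ψ.symm (h * a) = tG ε₁ lam * ψ.symm a := by rw [map_mul, hsh]
    have e2 : ψ.symm (a * h) = ψ.symm a * tG ε₁ lam := by rw [map_mul, hsh]
    rw [e1, e2, hsa, conj_tG hn ε₁ hε₁, ← tG_mul, ← tG_mul]
    congr 1
    funext m
    simp only [Pi.add_apply]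
    ring
  -- but direct computation shows they differ
  have hdt : HasData ((t : G n)) (fun _ => false) (fun m => (e m : ℝ)) := hasData_transl _
  have hdtinv := hasData_inv hdt
  have hda := hasData_mul (hasData_mul hdt hdh) hdtinv
  have hacoe : (a : G n) = (t : G n) * (h : G n) * ((t : G n))⁻¹ := rfl
  rw [← hacoe] at hda
  have hd1 := hasData_mul hdh hda
  have hd2 := hasData_mul hda hdh
  have hcoe : (h : G n) * (a : G n) = (a : G n) * (h : G n) := by
    have := congrArg (Subtype.val) hcomm
    exact this
  rw [hcoe] at hd1
  have key := congrFun ((hasData_vdat hd1).symm.trans (hasData_vdat hd2)) i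
  simp only [sgn, hσi] at key
  rw [he_def] at key
  norm_num at key
  linarith


/-! ## kappa vectors and squares -/

def eI (i : Fin n) : Fin n → ℤ := fun m => if m = i then 1 else 0

lemma eI_decomp (lam : Fin n → ℤ) : lam = ∑ l : Fin n, lam l • eI l := by
  funext m
  rw [Finset.sum_apply]
  have h1 : ∀ l, (lam l • eI l) m = if m = l then lam l else 0 := by
    intro l
    rw [Pi.smul_apply, smul_eq_mul]
    unfold eI
    by_cases h : m = l <;> simp [h]
  rw [Finset.sum_congr rfl (fun l _ => h1 l), Finset.sum_ite_eq]
  simp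

noncomputable def kap (ε : ℕ → ℕ → ℝ) (i : ℕ) : Fin n → ℤ :=
  fun m => if (m : ℕ) = i + 1 then 1 else
    if (m : ℕ) < i then (if ε (m : ℕ) i = 0 then 0 else 1) else 0

lemma kap_mem (ε : ℕ → ℕ → ℝ) (i : ℕ) (m : Fin n) :
    kap (n := n) ε i m = 0 ∨ kap (n := n) ε i m = 1 := by
  unfold kap; split_ifs <;> simp

lemma kap_cast (ε : ℕ → ℕ → ℝ) (hε : ∀ j i, j < i → i < n - 1 → ε j i = 0 ∨ ε j i = 1 / 2)
    {i : ℕ} (hi : i < n - 1) (m : Fin n) :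
    ((kap (n := n) ε i m : ℤ) : ℝ) = 2 * cvec n ε i m := by
  unfold kap cvec
  split_ifs with h1 h2 h3
  · norm_num
  · rw [h3]; norm_num
  · rcases hε (m : ℕ) i h2 hi with h | h
    · exact absurd h h3
    · rw [h]; norm_num
  · norm_num

lemma cS_single' (ε : ℕ → ℕ → ℝ) (m₀ : Fin n) :
    cS (n := n) ε (fun j => decide (j = m₀)) = cvec n ε (m₀ : ℕ) := by
  funext m
  unfold cS
  rw [Finset.sum_eq_single m₀]
  · simp
  · intro b _ hb
    rw [if_neg]
    simpa using hb
  · intro h; exact absurd (Finset.mem_univ _) h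

lemma gG_sq (hn : 2 ≤ n) (ε : ℕ → ℕ → ℝ)
    (hε : ∀ j i, j < i → i < n - 1 → ε j i = 0 ∨ ε j i = 1 / 2)
    {i : ℕ} (hi : i < n - 1) :
    gG ε i hi * gG ε i hi = tG ε (kap ε i) := by
  apply Subtype.ext
  show gammaGen ε i * gammaGen ε i = transl _
  have hdg := hasData_gammaGen (n := n) ε i
  refine ext_of_hasData (hasData_congr (hasData_mul hdg hdg) ?_ ?_) (hasData_transl _)
  · funext m; simp
  · funext m
    rw [kap_cast ε hε hi m]
    by_cases hmi : (m : ℕ) = i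
    · have hc0 : cvec n ε i m = 0 := by
        unfold cvec
        rw [if_neg (by omega), if_neg (by omega)]
      rw [hc0]
      simp
    · have hsg : sgn (fun m => decide ((m : ℕ) = i)) m = 1 := by
        simp [sgn, hmi]
      rw [hsg]
      ring


lemma kap_val (ε : ℕ → ℕ → ℝ) {i j : ℕ} (hjn : j < n) (hji : j < i) :
    kap (n := n) ε i ⟨j, hjn⟩ = if ε j i = 0 then 0 else 1 := by
  unfold kap
  have h1 : ((⟨j, hjn⟩ : Fin n) : ℕ) = j := rfl
  rw [h1, if_neg (by omega), if_pos hji]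

/-! ## The forward direction -/

theorem forward (hn : 2 ≤ n) (ε₁ ε₂ : ℕ → ℕ → ℝ)
    (hε₁ : ∀ j i, j < i → i < n - 1 → ε₁ j i = 0 ∨ ε₁ j i = 1 / 2)
    (hε₂ : ∀ j i, j < i → i < n - 1 → ε₂ j i = 0 ∨ ε₂ j i = 1 / 2)
    (ψ : ↥(GammaEps n ε₁) ≃* ↥(GammaEps n ε₂)) :
    ∀ j i, j < i → i < n - 1 → ε₁ j i = ε₂ j i := by
  classical
  -- Step 1 : the map M on the translation lattice
  have hMex : ∀ lam : Fin n → ℤ, ∃ Ml : Fin n → ℤ,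
      ∀ m, Vdat ((ψ (tG ε₁ lam) : G n)) m = (Ml m : ℝ) := by
    intro lam
    obtain ⟨hsupp, hcos, hdh⟩ := P_data ((mem_gamma_iff hn ε₂ hε₂ _).mp (ψ (tG ε₁ lam)).2)
    rw [step_T hn ε₁ ε₂ hε₁ hε₂ ψ lam] at hcos
    have hint : ∀ m, ∃ l : ℤ, Vdat ((ψ (tG ε₁ lam) : G n)) m = (l : ℝ) := by
      intro m
      obtain ⟨l, hl⟩ := hcos m
      refine ⟨l, ?_⟩
      rw [hl, cS_false]
      simp
    choose Ml hMl using hint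
    exact ⟨Ml, hMl⟩
  choose M hM using hMex
  have hψt : ∀ lam, ψ (tG ε₁ lam) = tG ε₂ (M lam) := by
    intro lam
    apply Subtype.ext
    obtain ⟨hsupp, hcos, hdh⟩ := P_data ((mem_gamma_iff hn ε₂ hε₂ _).mp (ψ (tG ε₁ lam)).2)
    have hd2 : HasData ((ψ (tG ε₁ lam) : G n)) (fun _ => false) (fun m => (M lam m : ℝ)) :=
      hasData_congr hdh (step_T hn ε₁ ε₂ hε₁ hε₂ ψ lam) (funext (hM lam))
    exact ext_of_hasData hd2 (hasData_transl _)
  have hM'ex : ∀ mu : Fin n → ℤ, ∃ mv : Fin n → ℤ, ψ.symm (tG ε₂ mu) = tG ε₁ mv := by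
    intro mu
    obtain ⟨hsupp, hcos, hdh⟩ := P_data ((mem_gamma_iff hn ε₁ hε₁ _).mp (ψ.symm (tG ε₂ mu)).2)
    have hT := step_T hn ε₂ ε₁ hε₂ hε₁ ψ.symm mu
    rw [hT] at hcos
    have hint : ∀ m, ∃ l : ℤ, Vdat ((ψ.symm (tG ε₂ mu) : G n)) m = (l : ℝ) := by
      intro m
      obtain ⟨l, hl⟩ := hcos m
      refine ⟨l, ?_⟩
      rw [hl, cS_false]
      simp
    choose Ml hMl using hint
    exact ⟨Ml, Subtype.ext (ext_of_hasData (hasData_congr hdh hT (funext hMl))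
      (hasData_transl _))⟩
  choose M' hψ't using hM'ex
  -- algebra of M
  have Madd : ∀ a b, M (a + b) = M a + M b := by
    intro a b
    apply tG_inj (ε := ε₂)
    rw [← hψt, tG_mul, map_mul, hψt, hψt, ← tG_mul]
  have M'M : ∀ lam, M' (M lam) = lam := by
    intro lam
    apply tG_inj (ε := ε₁)
    rw [← hψ't, ← hψt, MulEquiv.symm_apply_apply]
  have MM' : ∀ mu, M (M' mu) = mu := by
    intro mu
    apply tG_inj (ε := ε₂)
    rw [← hψt, ← hψ't, MulEquiv.apply_symm_apply]
  have Mzero : M 0 = 0 := by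
    have h := Madd 0 0
    rw [add_zero] at h
    exact (add_eq_left.mp h.symm)
  have M'zero : M' 0 = 0 := by
    have h := M'M 0
    rwa [Mzero] at h
  have Mneg : ∀ a, M (-a) = - (M a) := by
    intro a
    have h := Madd a (-a)
    rw [add_neg_cancel, Mzero] at h
    exact (eq_neg_of_add_eq_zero_right h.symm)
  have Msum : ∀ lam : Fin n → ℤ, M lam = ∑ l : Fin n, lam l • M (eI l) := by
    intro lam
    calc M lam = (AddMonoidHom.mk' M Madd) (∑ l : Fin n, lam l • eI l) := by
          rw [← eI_decomp lam]; rfl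
      _ = ∑ l : Fin n, (AddMonoidHom.mk' M Madd) (lam l • eI l) := map_sum _ _ _
      _ = ∑ l : Fin n, lam l • M (eI l) := Finset.sum_congr rfl
          (fun l _ => map_zsmul (AddMonoidHom.mk' M Madd) (lam l) (eI l))
  -- Step 2 : equivariance
  have Ekey : ∀ (i : ℕ) (hi : i < n - 1) (lam : Fin n → ℤ),
      sInt (Sdat ((ψ (gG ε₁ i hi) : G n))) (M lam)
        = M (sInt (fun m : Fin n => decide ((m : ℕ) = i)) lam) := by
    intro i hi lam
    apply tG_inj (ε := ε₂)
    have h1 : ψ (gG ε₁ i hi * tG ε₁ lam * (gG ε₁ i hi)⁻¹)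
        = ψ (tG ε₁ (sInt (Sdat ((gG ε₁ i hi : G n))) lam)) := by
      rw [conj_tG hn ε₁ hε₁]
    have hsg : Sdat ((gG ε₁ i hi : G n)) = fun m : Fin n => decide ((m : ℕ) = i) :=
      hasData_sdat (hasData_gammaGen ε₁ i)
    rw [hsg] at h1
    rw [map_mul, map_mul, map_inv, hψt, hψt] at h1
    rw [conj_tG hn ε₂ hε₂] at h1
    exact h1
  -- Step 3 : M is a signed permutation matrix
  have fact1 : ∀ (i : ℕ) (hi : i < n - 1) (l m : Fin n), M (eI l) m ≠ 0 →
      Sdat ((ψ (gG ε₁ i hi) : G n)) m = decide ((l : ℕ) = i) := by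
    intro i hi l m hne
    have hE := congrFun (Ekey i hi (eI l)) m
    by_cases hli : (l : ℕ) = i
    · have hsplit : sInt (fun m : Fin n => decide ((m : ℕ) = i)) (eI l) = -eI l := by
        funext m'
        simp only [sInt, eI, Pi.neg_apply]
        by_cases hml : m' = l
        · subst hml; simp [hli]
        · simp [hml]
      rw [hsplit, Mneg] at hE
      simp only [sInt, Pi.neg_apply] at hE
      rcases hσ : Sdat ((ψ (gG ε₁ i hi) : G n)) m with _ | _
      · rw [hσ] at hE
        simp at hE
        omega
      · simp [hli]
    · have hsplit : sInt (fun m : Fin n => decide ((m : ℕ) = i)) (eI l) = eI l := by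
        funext m'
        simp only [sInt, eI]
        by_cases hml : m' = l
        · subst hml; simp [hli]
        · simp [hml]
      rw [hsplit] at hE
      simp only [sInt] at hE
      rcases hσ : Sdat ((ψ (gG ε₁ i hi) : G n)) m with _ | _
      · simp [hli]
      · rw [hσ] at hE
        simp at hE
        omega
  have hrow : ∀ m : Fin n, ∃ l : Fin n, M (eI l) m ≠ 0 := by
    intro m
    by_contra hcon
    push_neg at hcon
    have h1 : M (M' (eI m)) = eI m := MM' _
    have h2 := congrFun (Msum (M' (eI m))) m
    rw [h1, Finset.sum_apply] at h2
    rw [Finset.sum_eq_zero (fun l _ => by rw [Pi.smul_apply, hcon l, smul_zero])] at h2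
    simp [eI] at h2
  choose π hπ using hrow
  have huniq : ∀ (m l : Fin n), M (eI l) m ≠ 0 → l = π m := by
    intro m l hne
    by_contra hll
    have hp : ∀ (i : ℕ), i < n - 1 → (decide ((l : ℕ) = i) = decide (((π m) : ℕ) = i)) := by
      intro i hi
      rw [← fact1 i hi l m hne, ← fact1 i hi (π m) m (hπ m)]
    by_cases h1 : (l : ℕ) < n - 1
    · have hd := hp (l : ℕ) h1
      have hv : (decide (((π m) : ℕ) = (l : ℕ))) = true := by rw [← hd]; simp
      exact hll (Fin.ext (of_decide_eq_true hv).symm)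
    · by_cases h2 : ((π m) : ℕ) < n - 1
      · have hd := hp ((π m) : ℕ) h2
        have hv : (decide ((l : ℕ) = ((π m) : ℕ))) = true := by rw [hd]; simp
        exact hll (Fin.ext (of_decide_eq_true hv))
      · have hl1 : (l : ℕ) = n - 1 := by have := l.isLt; omega
        have hl2 : ((π m) : ℕ) = n - 1 := by have := (π m).isLt; omega
        exact hll (Fin.ext (by omega))
  have hπsurj : Function.Surjective π := by
    intro l
    have hcol : M (eI l) ≠ 0 := by
      intro h0
      have h1 : M' (M (eI l)) = eI l := M'M _
      rw [h0, M'zero] at h1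
      have := congrFun h1 l
      simp [eI] at this
    obtain ⟨m, hm⟩ : ∃ m, M (eI l) m ≠ 0 := by
      by_contra hc
      push_neg at hc
      exact hcol (funext hc)
    exact ⟨m, (huniq m l hm).symm⟩
  have hπinj : Function.Injective π := Finite.injective_iff_surjective.mpr hπsurj
  choose τ hτ using hπsurj
  have σform : ∀ (i : ℕ) (hi : i < n - 1) (m : Fin n),
      Sdat ((ψ (gG ε₁ i hi) : G n)) m = decide (((π m) : ℕ) = i) :=
    fun i hi m => fact1 i hi (π m) m (hπ m)
  have hd_unit : ∀ m : Fin n, M (eI (π m)) m = 1 ∨ M (eI (π m)) m = -1 := by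
    intro m
    have h1 : M (M' (eI m)) = eI m := MM' _
    have h2 := congrFun (Msum (M' (eI m))) m
    rw [h1, Finset.sum_apply] at h2
    rw [Finset.sum_eq_single (π m)] at h2
    · rw [Pi.smul_apply, smul_eq_mul] at h2
      simp only [eI, if_pos rfl] at h2
      have : IsUnit (M (eI (π m)) m) :=
        IsUnit.of_mul_eq_one _ (by rw [mul_comm]; exact h2.symm)
      rwa [Int.isUnit_iff] at this
    · intro l _ hl
      rw [Pi.smul_apply]
      rcases eq_or_ne (M (eI l) m) 0 with h | h
      · rw [h, smul_zero]
      · exact absurd (huniq m l h) hl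
    · intro h; exact absurd (Finset.mem_univ _) h
  have Mapp : ∀ (lam : Fin n → ℤ) (m : Fin n),
      M lam m = lam (π m) * M (eI (π m)) m := by
    intro lam m
    have h2 := congrFun (Msum lam) m
    rw [Finset.sum_apply] at h2
    rw [Finset.sum_eq_single (π m)] at h2
    · rw [h2, Pi.smul_apply, smul_eq_mul]
    · intro l _ hl
      rw [Pi.smul_apply]
      rcases eq_or_ne (M (eI l) m) 0 with h | h
      · rw [h, smul_zero]
      · exact absurd (huniq m l h) hl
    · intro h; exact absurd (Finset.mem_univ _) h
  -- π fixes the last index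
  have hπlast : π ⟨n - 1, by omega⟩ = ⟨n - 1, by omega⟩ := by
    set lastF : Fin n := ⟨n - 1, by omega⟩ with hlf
    have hval : ((π lastF) : ℕ) = n - 1 := by
      by_contra hc
      have hlt : ((π lastF) : ℕ) < n - 1 := by have := (π lastF).isLt; omega
      obtain ⟨hsupp, -, -⟩ := P_data ((mem_gamma_iff hn ε₂ hε₂ _).mp
        (ψ (gG ε₁ ((π lastF) : ℕ) hlt)).2)
      have h7 := hsupp lastF (by rw [σform ((π lastF) : ℕ) hlt lastF]; simp)
      have h6 : (lastF : ℕ) = n - 1 := rfl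
      omega
    exact Fin.ext hval
  -- Step 4 : the parity relation coming from squares
  have hKEY : ∀ (iF : Fin n), (iF : ℕ) < n - 1 → ∀ m : Fin n, π m ≠ iF →
      kap (n := n) ε₂ ((τ iF) : ℕ) m = kap (n := n) ε₁ (iF : ℕ) (π m) := by
    intro iF hiF m hne
    obtain ⟨hsupp, hcos, hdh⟩ := P_data ((mem_gamma_iff hn ε₂ hε₂ _).mp
      (ψ (gG ε₁ (iF : ℕ) hiF)).2)
    have hσs : Sdat ((ψ (gG ε₁ (iF : ℕ) hiF) : G n)) = fun j => decide (j = τ iF) := by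
      funext j
      rw [σform (iF : ℕ) hiF j]
      by_cases hj : j = τ iF
      · rw [hj]
        have h5 : π (τ iF) = iF := hτ iF
        simp [h5]
      · have hget : π j ≠ iF := by
          intro h
          exact hj (hπinj (by rw [h, hτ iF]))
        have hv : ((π j) : ℕ) ≠ (iF : ℕ) := fun h => hget (Fin.ext h)
        simp [hv, hj]
    have hm0lt : ((τ iF) : ℕ) < n - 1 := by
      apply hsupp
      rw [hσs]
      simp
    have hcS : cS ε₂ (Sdat ((ψ (gG ε₁ (iF : ℕ) hiF) : G n))) = cvec n ε₂ ((τ iF) : ℕ) := by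
      rw [hσs]; exact cS_single' ε₂ (τ iF)
    have hsq : ψ (gG ε₁ (iF : ℕ) hiF) * ψ (gG ε₁ (iF : ℕ) hiF)
        = tG ε₂ (M (kap ε₁ (iF : ℕ))) := by
      rw [← map_mul, gG_sq hn ε₁ hε₁ hiF, hψt]
    have hel : ((ψ (gG ε₁ (iF : ℕ) hiF) : G n)) * ((ψ (gG ε₁ (iF : ℕ) hiF) : G n))
        = transl (fun m => ((M (kap ε₁ (iF : ℕ)) m : ℤ) : ℝ)) := congrArg Subtype.val hsq
    have hd3 : HasData ((ψ (gG ε₁ (iF : ℕ) hiF) : G n) * (ψ (gG ε₁ (iF : ℕ) hiF) : G n))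
        (fun _ => false) (fun m => ((M (kap ε₁ (iF : ℕ)) m : ℤ) : ℝ)) := by
      rw [hel]; exact hasData_transl _
    have hveq := congrFun ((hasData_vdat (hasData_mul hdh hdh)).symm.trans
      (hasData_vdat hd3)) m
    have hmne : m ≠ τ iF := by
      intro h
      rw [h] at hne
      exact hne (hτ iF)
    have hσm : Sdat ((ψ (gG ε₁ (iF : ℕ) hiF) : G n)) m = false := by
      rw [hσs]
      simp [hmne]
    have hsgn1 : sgn (Sdat ((ψ (gG ε₁ (iF : ℕ) hiF) : G n))) m = 1 := by
      simp [sgn, hσm]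
    rw [hsgn1, one_mul] at hveq
    obtain ⟨z, hz⟩ := hcos m
    rw [congrFun hcS m] at hz
    have hMv := Mapp (kap ε₁ (iF : ℕ)) m
    have hkc := kap_cast ε₂ hε₂ hm0lt m
    have hMvR : ((M (kap ε₁ (iF : ℕ)) m : ℤ) : ℝ)
        = ((kap (n := n) ε₁ (iF : ℕ) (π m) : ℤ) : ℝ) * ((M (eI (π m)) m : ℤ) : ℝ) := by
      exact_mod_cast congrArg (fun t : ℤ => (t : ℝ)) hMv
    have hreal : ((kap (n := n) ε₂ ((τ iF : Fin n) : ℕ) m + 2 * z : ℤ) : ℝ)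
        = ((kap (n := n) ε₁ (iF : ℕ) (π m) * M (eI (π m)) m : ℤ) : ℝ) := by
      push_cast
      push_cast at hMvR
      nlinarith [hveq, hz, hkc, hMvR]
    have hint : kap (n := n) ε₂ ((τ iF : Fin n) : ℕ) m + 2 * z
        = kap (n := n) ε₁ (iF : ℕ) (π m) * M (eI (π m)) m := by exact_mod_cast hreal
    rcases kap_mem (n := n) ε₁ (iF : ℕ) (π m) with h1 | h1 <;>
      rcases kap_mem (n := n) ε₂ ((τ iF : Fin n) : ℕ) m with h2 | h2 <;>
      rcases hd_unit m with h3 | h3 <;>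
      rw [h1, h3] at hint <;> omega
  -- Step 5 : π is the identity
  have hπid : ∀ (dd : ℕ) (m : Fin n), n - 1 ≤ (m : ℕ) + dd → π m = m := by
    intro dd
    induction dd with
    | zero =>
      intro m hm
      have hm' : m = ⟨n - 1, by omega⟩ := Fin.ext (by have := m.isLt; simp; omega)
      rw [hm']
      exact hπlast
    | succ dd ih =>
      intro m hm
      by_cases hc : n - 1 ≤ (m : ℕ) + dd
      · exact ih m hc
      · have hmlt : (m : ℕ) < n - 1 := by omega
        have hm1 : (m : ℕ) + 1 < n := by omega
        have h6 : ((⟨(m : ℕ) + 1, hm1⟩ : Fin n) : ℕ) = (m : ℕ) + 1 := rfl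
        have hπm' : π ⟨(m : ℕ) + 1, hm1⟩ = ⟨(m : ℕ) + 1, hm1⟩ := ih _ (by omega)
        have hk := hKEY m hmlt ⟨(m : ℕ) + 1, hm1⟩
          (by rw [hπm']; intro h; have hval := congrArg Fin.val h; omega)
        rw [hπm'] at hk
        have h1 : kap (n := n) ε₁ ((m : ℕ)) ⟨(m : ℕ) + 1, hm1⟩ = 1 := by
          unfold kap; simp
        rw [h1] at hk
        have hval : (m : ℕ) + 1 = ((τ m) : ℕ) + 1 ∨ (m : ℕ) + 1 < ((τ m) : ℕ) := by
          by_contra hcon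
          push_neg at hcon
          unfold kap at hk
          rw [if_neg (by simp only [Fin.val_mk]; omega),
            if_neg (by simp only [Fin.val_mk]; omega)] at hk
          omega
        rcases hval with he | hlt
        · have ht : τ m = m := Fin.ext (by omega)
          conv_lhs => rw [← ht]
          exact hτ m
        · have h2 := ih (τ m) (by omega)
          rw [hτ m] at h2
          have := congrArg Fin.val h2
          omega
  have hπall : ∀ m : Fin n, π m = m := fun m => hπid n m (by omega)
  have hτall : ∀ l : Fin n, τ l = l := fun l => hπinj (by rw [hτ l, hπall l])
  -- Step 6 : conclusion
  intro j i hji hi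
  have hjn : j < n := by omega
  have hin : i < n := by omega
  have hiF : ((⟨i, hin⟩ : Fin n) : ℕ) < n - 1 := by simpa using hi
  have hneF : π ⟨j, hjn⟩ ≠ ⟨i, hin⟩ := by
    rw [hπall]
    intro h
    have hval := congrArg Fin.val h
    simp only [Fin.val_mk] at hval
    omega
  have hk := hKEY ⟨i, hin⟩ hiF ⟨j, hjn⟩ hneF
  rw [hτall, hπall] at hk
  rw [show ((⟨i, hin⟩ : Fin n) : ℕ) = i from rfl] at hk
  rw [kap_val ε₂ hjn hji, kap_val ε₁ hjn hji] at hk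
  rcases hε₁ j i hji hi with h1 | h1 <;> rcases hε₂ j i hji hi with h2 | h2 <;>
    rw [h1, h2] <;> rw [h1, h2] at hk <;> norm_num at hk


lemma set_eq (ε ε' : ℕ → ℕ → ℝ)
    (h : ∀ j i, j < i → i < n - 1 → ε j i = ε' j i) :
    gammaEpsSet n ε = gammaEpsSet n ε' := by
  have hc : ∀ i, i < n - 1 → cvec n ε i = cvec n ε' i := by
    intro i hi
    funext m
    unfold cvec
    split_ifs with h1 h2
    · rfl
    · exact h (m : ℕ) i h2 hi
    · rfl
  unfold gammaEpsSet
  ext γ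
  simp only [Set.mem_setOf_eq]
  constructor <;> rintro (⟨i, hi, hγ⟩ | h2)
  · exact Or.inl ⟨i, hi, by rw [← hc i hi]; exact hγ⟩
  · exact Or.inr h2
  · exact Or.inl ⟨i, hi, by rw [hc i hi]; exact hγ⟩
  · exact Or.inr h2

end GEaux

/-- Two groups `Γ(ε)` and `Γ(ε')` are isomorphic as abstract groups if and only if the
parameters coincide: `ε_{ji} = ε'_{ji}` for all `j < i ≤ n−2` (indices numbered from `0`). -/
theorem gammaEps_iso_iff (n : ℕ) (hn : 2 ≤ n) (ε ε' : ℕ → ℕ → ℝ)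
    (hε : ∀ j i, j < i → i < n - 1 → ε j i = 0 ∨ ε j i = 1 / 2)
    (hε' : ∀ j i, j < i → i < n - 1 → ε' j i = 0 ∨ ε' j i = 1 / 2) :
    Nonempty (GammaEps n ε ≃* GammaEps n ε') ↔
      ∀ j i, j < i → i < n - 1 → ε j i = ε' j i := by
  constructor
  · rintro ⟨ψ⟩
    exact GEaux.forward hn ε ε' hε hε' ψ
  · intro h
    have heq : GammaEps n ε = GammaEps n ε' := by
      unfold GammaEps
      rw [GEaux.set_eq ε ε' h]
    exact ⟨MulEquiv.subgroupCongr heq⟩
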